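/- (Inheritance criterion, Uniform Exterior Sphere.) Under hypotheses (i)–(iv) on D = ⋂_{i=1}^p D_i, the set D satisfies the Uniform Exterior Sphere property UES(α) with constant α = β₀ · min_{1 ≤ i ≤ p} α_i, i.e. N^D_x = N^D_{x,α} ≠ ∅ for every x ∈ ∂D. -/

import Mathlib

open scoped RealInnerProductSpace

/-- The set `N^D_{x,α}` of inward unit normal vectors to `D` at `x` with constant `α`. -/
def normalSet {m : ℕ} (D : Set (EuclideanSpace ℝ (Fin m))) (x : EuclideanSpace ℝ (Fin m))
    (α : ℝ) : Set (EuclideanSpace ℝ (Fin m)) :=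
  {v | ‖v‖ = 1 ∧ Metric.ball (x - α • v) α ∩ D = ∅}

/-- The set `N^D_x = ⋃_{α>0} N^D_{x,α}` of inward unit normal vectors to `D` at `x`. -/
def normalCone {m : ℕ} (D : Set (EuclideanSpace ℝ (Fin m))) (x : EuclideanSpace ℝ (Fin m)) :
    Set (EuclideanSpace ℝ (Fin m)) :=
  ⋃ α ∈ Set.Ioi (0 : ℝ), normalSet D x α

/-- `D` satisfies the Uniform Exterior Sphere property with constant `α`. -/
def UES {m : ℕ} (D : Set (EuclideanSpace ℝ (Fin m))) (α : ℝ) : Prop :=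
  ∀ x ∈ frontier D, normalCone D x = normalSet D x α ∧ (normalSet D x α).Nonempty

/-- `D` satisfies the Uniform Normal Cone property with constants `β`, `δ`. -/
def UNC {m : ℕ} (D : Set (EuclideanSpace ℝ (Fin m))) (β δ : ℝ) : Prop :=
  ∀ x ∈ frontier D, ∃ l : EuclideanSpace ℝ (Fin m), ‖l‖ = 1 ∧
    ∀ y ∈ frontier D, ‖y - x‖ ≤ δ → ∀ v ∈ normalCone D y, ⟪v, l⟫ ≥ Real.sqrt (1 - β ^ 2)

/-
Fix `x ∈ ∂D` and let `I = {i : x ∈ ∂Dᵢ}`. If the ball of some radius `r` touching `D` at `x`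
in direction `v` misses `D`, then `⟪z, v⟫ ≥ 0` for every `z` with `⟪z, nᵢ(x)⟫ > 0` for all `i ∈ I`,
because the interior cone conditions put `x + t z` into `D` for small `t > 0`. For `y ∈ D`,
`w = y - x` and `c > |w|² / (2 β₀ minᵢ αᵢ)`, the exterior spheres of the `Dᵢ` together with the
compatibility vector `l` of (iv) show that `z = w + c l` is such a vector, so `⟪w, v⟫ ≥ -c`.
Letting `c` decrease gives `|w|² + 2 β₀ (minᵢ αᵢ) ⟪w, v⟫ ≥ 0`, i.e. the ball of radius
`β₀ minᵢ αᵢ` misses `D` as well. Since `β₀ ≤ 1`, that radius is at most `αᵢ`, so `nᵢ(x)` itself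
is such a normal for any `i ∈ I`.
-/

open Filter Metric Set
open scoped Topology

theorem exists_mem_frontier_of_mem_frontier_iInter {X ι : Type*} [TopologicalSpace X] [Finite ι]
    {s : ι → Set X} {x : X} (hx : x ∈ frontier (⋂ i, s i)) : ∃ i, x ∈ frontier (s i) := by
  rw [frontier, interior_iInter_of_finite, Set.mem_sdiff, mem_iInter, not_forall] at hx
  obtain ⟨hcl, i, hi⟩ := hx
  exact ⟨i, closure_mono (iInter_subset s i) hcl, hi⟩

section InnerProductSpace

variable {E : Type*} [NormedAddCommGroup E] [InnerProductSpace ℝ E]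

def InteriorConeCondition (S : Set E) (x n : E) : Prop :=
  ∀ ε > (0 : ℝ), ∃ δ > (0 : ℝ), ∀ z : E, ‖z‖ ≤ δ → ⟪z, n⟫ ≥ ε * ‖z‖ → x + z ∈ S

theorem InteriorConeCondition.eventually_add_smul_mem {S : Set E} {x n z : E}
    (h : InteriorConeCondition S x n) (hz : 0 < ⟪z, n⟫) :
    ∀ᶠ t in 𝓝[>] (0 : ℝ), x + t • z ∈ S := by
  have hz₀ : 0 < ‖z‖ := norm_pos_iff.2 fun h0 => by simp [h0] at hz
  obtain ⟨δ, hδ, hcone⟩ := h (⟪z, n⟫ / ‖z‖) (by positivity)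
  filter_upwards [Ioc_mem_nhdsGT (div_pos hδ hz₀)] with t ⟨ht, htδ⟩
  apply hcone
  · rw [norm_smul, Real.norm_of_nonneg ht.le]
    exact (le_div_iff₀ hz₀).1 htδ
  · rw [real_inner_smul_left, norm_smul, Real.norm_of_nonneg ht.le]
    field_simp
    rfl

theorem eventually_add_smul_mem_of_mem_interior {S : Set E} {x : E} (hx : x ∈ interior S)
    (z : E) : ∀ᶠ t in 𝓝[>] (0 : ℝ), x + t • z ∈ S := by
  have hcont : Tendsto (fun t : ℝ => x + t • z) (𝓝 0) (𝓝 x) :=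
    (continuous_const.add (continuous_id.smul continuous_const)).tendsto' _ _ (by simp)
  exact (hcont.eventually (mem_interior_iff_mem_nhds.1 hx)).filter_mono nhdsWithin_le_nhds

theorem ball_sub_smul_inter_eq_empty_iff {S : Set E} {x v : E} {r : ℝ} (hr : 0 < r)
    (hv : ‖v‖ = 1) :
    ball (x - r • v) r ∩ S = ∅ ↔ ∀ y ∈ S, 0 ≤ ‖y - x‖ ^ 2 + 2 * r * ⟪y - x, v⟫ := by
  have hdist : ∀ y, dist y (x - r • v) ^ 2 = ‖y - x‖ ^ 2 + 2 * r * ⟪y - x, v⟫ + r ^ 2 := by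
    intro y
    rw [dist_eq_norm, show y - (x - r • v) = (y - x) + r • v by module, norm_add_sq_real,
      real_inner_smul_right, norm_smul, Real.norm_of_nonneg hr.le, hv]
    ring
  simp only [eq_empty_iff_forall_notMem, mem_inter_iff, mem_ball, not_and']
  refine forall₂_congr fun y _ => ?_
  rw [not_lt, ← sq_le_sq₀ hr.le dist_nonneg, hdist]
  constructor <;> intro h <;> linarith

theorem ball_sub_smul_subset_ball_sub_smul {x v : E} {r s : ℝ} (hv : ‖v‖ = 1) (hsr : s ≤ r) :
    ball (x - s • v) s ⊆ ball (x - r • v) r := by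
  refine ball_subset_ball' (le_of_eq ?_)
  rw [dist_eq_norm, show x - s • v - (x - r • v) = (r - s) • v by module, norm_smul, hv,
    Real.norm_of_nonneg (sub_nonneg.2 hsr)]
  ring

theorem inner_nonneg_of_ball_inter_eq_empty {S : Set E} {x v z : E} {r : ℝ} (hr : 0 < r)
    (hv : ‖v‖ = 1) (hball : ball (x - r • v) r ∩ S = ∅)
    (hz : ∀ᶠ t in 𝓝[>] (0 : ℝ), x + t • z ∈ S) : 0 ≤ ⟪z, v⟫ := by
  have hquad : ∀ᶠ t in 𝓝[>] (0 : ℝ), 0 ≤ t * ‖z‖ ^ 2 + 2 * r * ⟪z, v⟫ := by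
    filter_upwards [hz, self_mem_nhdsWithin] with t hmem (ht : 0 < t)
    have h := (ball_sub_smul_inter_eq_empty_iff hr hv).1 hball _ hmem
    rw [add_sub_cancel_left, norm_smul, real_inner_smul_left, Real.norm_of_nonneg ht.le] at h
    exact nonneg_of_mul_nonneg_right (by linarith) ht
  have hlim : Tendsto (fun t : ℝ => t * ‖z‖ ^ 2 + 2 * r * ⟪z, v⟫) (𝓝[>] 0)
      (𝓝 (0 * ‖z‖ ^ 2 + 2 * r * ⟪z, v⟫)) :=
    ((continuous_id.mul continuous_const).add continuous_const).tendsto' _ _ rfl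
      |>.mono_left nhdsWithin_le_nhds
  have h := ge_of_tendsto hlim hquad
  rw [zero_mul, zero_add] at h
  exact nonneg_of_mul_nonneg_right h (by positivity)

/-- `hdual` says that `v` lies in the dual of the open cone cut out by the `n i`, and `hln` that `l`
lies uniformly inside that cone. -/
theorem norm_sq_add_inner_nonneg_of_forall_inner_pos {ι : Type*} {I : Set ι} {n : ι → E}
    {a : ι → ℝ} {w v l : E} {β₀ S : ℝ}
    (hdual : ∀ z, (∀ i ∈ I, 0 < ⟪z, n i⟫) → 0 ≤ ⟪z, v⟫) (hlv : ⟪l, v⟫ ≤ 1)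
    (hln : ∀ i ∈ I, β₀ ≤ ⟪l, n i⟫) (hβ₀ : 0 < β₀) (hS : 0 < S) (hSa : ∀ i ∈ I, S ≤ a i)
    (hw : ∀ i ∈ I, 0 ≤ ‖w‖ ^ 2 + 2 * a i * ⟪w, n i⟫) :
    0 ≤ ‖w‖ ^ 2 + 2 * (β₀ * S) * ⟪w, v⟫ := by
  have hA : 0 < 2 * (β₀ * S) := by positivity
  suffices -⟪w, v⟫ ≤ ‖w‖ ^ 2 / (2 * (β₀ * S)) by
    rw [le_div_iff₀ hA] at this
    linarith
  refine le_of_forall_gt_imp_ge_of_dense fun c hc => ?_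
  rw [div_lt_iff₀ hA] at hc
  have hc₀ : 0 < c := pos_of_mul_pos_left ((sq_nonneg _).trans_lt hc) hA.le
  have hcone : ∀ i ∈ I, 0 < ⟪w + c • l, n i⟫ := by
    intro i hi
    have hai : 0 < a i := hS.trans_le (hSa i hi)
    rw [inner_add_left, real_inner_smul_left]
    refine pos_of_mul_pos_right (?_ : 0 < 2 * a i * _) (by positivity)
    nlinarith [hw i hi, mul_le_mul_of_nonneg_left (hln i hi) hc₀.le,
      mul_le_mul_of_nonneg_right (hSa i hi) (mul_pos hc₀ hβ₀).le]
  have h := hdual _ hcone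
  rw [inner_add_left, real_inner_smul_left] at h
  nlinarith

theorem ball_sub_smul_inter_iInter_eq_empty {ι : Type*} [Finite ι] {D : ι → Set E}
    {n : ι → E} {a : ι → ℝ} {x v l : E} {β₀ S r : ℝ} (hx : x ∈ ⋂ i, D i)
    (hn : ∀ i, x ∈ frontier (D i) → ‖n i‖ = 1)
    (hcone : ∀ i, x ∈ frontier (D i) → InteriorConeCondition (D i) x (n i))
    (hext : ∀ i, x ∈ frontier (D i) → ball (x - a i • n i) (a i) ∩ D i = ∅)
    (hl : ‖l‖ = 1) (hln : ∀ i, x ∈ frontier (D i) → β₀ ≤ ⟪l, n i⟫) (hβ₀ : 0 < β₀)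
    (hS : 0 < S) (hSa : ∀ i, S ≤ a i)
    (hr : 0 < r) (hv : ‖v‖ = 1) (hball : ball (x - r • v) r ∩ ⋂ i, D i = ∅) :
    ball (x - (β₀ * S) • v) (β₀ * S) ∩ ⋂ i, D i = ∅ := by
  have hdual : ∀ z, (∀ i, x ∈ frontier (D i) → 0 < ⟪z, n i⟫) → 0 ≤ ⟪z, v⟫ := by
    refine fun z hz => inner_nonneg_of_ball_inter_eq_empty hr hv hball ?_
    simp only [mem_iInter, eventually_all]
    intro i
    by_cases hint : x ∈ interior (D i)
    · exact eventually_add_smul_mem_of_mem_interior hint z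
    · have hfr : x ∈ frontier (D i) := ⟨subset_closure (mem_iInter.1 hx i), hint⟩
      exact (hcone i hfr).eventually_add_smul_mem (hz i hfr)
  have hlv : ⟪l, v⟫ ≤ 1 := (real_inner_le_norm l v).trans_eq (by rw [hl, hv, one_mul])
  rw [ball_sub_smul_inter_eq_empty_iff (by positivity) hv]
  intro y hy
  refine norm_sq_add_inner_nonneg_of_forall_inner_pos (I := {i | x ∈ frontier (D i)}) hdual hlv
    hln hβ₀ hS (fun i _ => hSa i) fun i hi => ?_
  exact (ball_sub_smul_inter_eq_empty_iff (hS.trans_le (hSa i)) (hn i hi)).1 (hext i hi) y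
    (mem_iInter.1 hy i)

end InnerProductSpace

theorem stmt_6_general {m p : ℕ}
    (D : Fin p → Set (EuclideanSpace ℝ (Fin m)))
    -- each `Dᵢ` is the closure of a nonempty open set
    (hDcl : ∀ i, ∃ U : Set (EuclideanSpace ℝ (Fin m)), IsOpen U ∧ U.Nonempty ∧ D i = closure U)
    (nv : Fin p → EuclideanSpace ℝ (Fin m) → EuclideanSpace ℝ (Fin m))
    -- (i) distinguished unit normal vectors with the interior cone condition
    (hunit : ∀ i, ∀ x ∈ (⋂ j, D j) ∩ frontier (D i), ‖nv i x‖ = 1)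
    (hcone : ∀ i, ∀ x ∈ (⋂ j, D j) ∩ frontier (D i), ∀ ε > (0 : ℝ), ∃ δ > (0 : ℝ),
      ∀ z : EuclideanSpace ℝ (Fin m), ‖z‖ ≤ δ → ⟪z, nv i x⟫ ≥ ε * ‖z‖ → x + z ∈ D i)
    -- (ii) uniform exterior sphere restricted to `D`
    (α : Fin p → ℝ) (hα : ∀ i, 0 < α i)
    (hUESi : ∀ i, ∀ x ∈ (⋂ j, D j) ∩ frontier (D i),
      Metric.ball (x - α i • nv i x) (α i) ∩ D i = ∅)
    -- (iii) uniform normal cone restricted to `D`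
    (β : Fin p → ℝ)
    (δ : Fin p → ℝ)
    -- (iv) compatibility
    (β₀ : ℝ) (hβ₀ : β₀ > Real.sqrt (2 * sSup (Set.range β)))
    (hcompat : ∀ x ∈ frontier (⋂ j, D j), ∃ l : EuclideanSpace ℝ (Fin m), ‖l‖ = 1 ∧
      ∀ i, x ∈ frontier (D i) → ⟪l, nv i x⟫ ≥ β₀) :
    UES (⋂ j, D j) (β₀ * sInf (Set.range α)) := by
  intro x hx
  have hclosed : IsClosed (⋂ j, D j) := isClosed_iInter fun i => by
    obtain ⟨U, -, -, hU⟩ := hDcl i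
    exact hU ▸ isClosed_closure
  have hxD := hclosed.frontier_subset hx
  obtain ⟨i₁, hi₁⟩ := exists_mem_frontier_of_mem_frontier_iInter hx
  obtain ⟨l, hl, hln⟩ := hcompat x hx
  have hβ₀pos : 0 < β₀ := (Real.sqrt_nonneg _).trans_lt hβ₀
  have hβ₀le : β₀ ≤ 1 := (hln i₁ hi₁).trans <| (real_inner_le_norm _ _).trans_eq <| by
    rw [hl, hunit i₁ x ⟨hxD, hi₁⟩, one_mul]
  have hSα : ∀ i, sInf (range α) ≤ α i := fun i =>
    csInf_le (finite_range α).bddBelow ⟨i, rfl⟩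
  have hS : 0 < sInf (range α) := by
    obtain ⟨i, hi⟩ := Set.Nonempty.csInf_mem (s := range α) ⟨α i₁, i₁, rfl⟩ (finite_range α)
    exact hi ▸ hα i
  have hA : 0 < β₀ * sInf (range α) := mul_pos hβ₀pos hS
  refine ⟨Subset.antisymm ?_ fun v hv => mem_biUnion hA hv, nv i₁ x, hunit i₁ x ⟨hxD, hi₁⟩, ?_⟩
  · simp only [normalCone, normalSet, subset_def, mem_iUnion₂]
    rintro v ⟨r, hr, hv, hball⟩
    exact ⟨hv, ball_sub_smul_inter_iInter_eq_empty hxD (fun i hi => hunit i x ⟨hxD, hi⟩)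
      (fun i hi => hcone i x ⟨hxD, hi⟩) (fun i hi => hUESi i x ⟨hxD, hi⟩) hl hln hβ₀pos hS hSα
      hr hv hball⟩
  · refine subset_eq_empty (inter_subset_inter
      (ball_sub_smul_subset_ball_sub_smul (hunit i₁ x ⟨hxD, hi₁⟩) ?_) (iInter_subset D i₁))
      (hUESi i₁ x ⟨hxD, hi₁⟩)
    calc β₀ * sInf (range α) ≤ 1 * α i₁ := mul_le_mul hβ₀le (hSα i₁) hS.le zero_le_one
      _ = α i₁ := one_mul _

/-- Inheritance criterion, Uniform Exterior Sphere. Under hypotheses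
(i)–(iv) on `D = ⋂ᵢ Dᵢ`, the set `D` satisfies `UES(α)` with `α = β₀ · minᵢ αᵢ`. -/
theorem stmt_6 {m p : ℕ} (hm : 2 ≤ m) (hp : 0 < p)
    (D : Fin p → Set (EuclideanSpace ℝ (Fin m)))
    -- each `Dᵢ` is the closure of a nonempty open set
    (hDcl : ∀ i, ∃ U : Set (EuclideanSpace ℝ (Fin m)), IsOpen U ∧ U.Nonempty ∧ D i = closure U)
    (nv : Fin p → EuclideanSpace ℝ (Fin m) → EuclideanSpace ℝ (Fin m))
    -- (i) distinguished unit normal vectors with the interior cone condition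
    (hunit : ∀ i, ∀ x ∈ (⋂ j, D j) ∩ frontier (D i), ‖nv i x‖ = 1)
    (hcone : ∀ i, ∀ x ∈ (⋂ j, D j) ∩ frontier (D i), ∀ ε > (0 : ℝ), ∃ δ > (0 : ℝ),
      ∀ z : EuclideanSpace ℝ (Fin m), ‖z‖ ≤ δ → ⟪z, nv i x⟫ ≥ ε * ‖z‖ → x + z ∈ D i)
    -- (ii) uniform exterior sphere restricted to `D`
    (α : Fin p → ℝ) (hα : ∀ i, 0 < α i)
    (hUESi : ∀ i, ∀ x ∈ (⋂ j, D j) ∩ frontier (D i),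
      Metric.ball (x - α i • nv i x) (α i) ∩ D i = ∅)
    -- (iii) uniform normal cone restricted to `D`
    (β : Fin p → ℝ) (hβ : ∀ i, β i ∈ Set.Ico (0 : ℝ) 1)
    (δ : Fin p → ℝ) (hδ : ∀ i, 0 < δ i)
    (hUNCi : ∀ i, ∀ x ∈ (⋂ j, D j) ∩ frontier (D i), ∃ l : EuclideanSpace ℝ (Fin m), ‖l‖ = 1 ∧
      ∀ y ∈ (⋂ j, D j) ∩ frontier (D i), ‖y - x‖ ≤ δ i →
        ⟪nv i y, l⟫ ≥ Real.sqrt (1 - β i ^ 2))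
    -- (iv) compatibility
    (β₀ : ℝ) (hβ₀ : β₀ > Real.sqrt (2 * sSup (Set.range β)))
    (hcompat : ∀ x ∈ frontier (⋂ j, D j), ∃ l : EuclideanSpace ℝ (Fin m), ‖l‖ = 1 ∧
      ∀ i, x ∈ frontier (D i) → ⟪l, nv i x⟫ ≥ β₀) :
    UES (⋂ j, D j) (β₀ * sInf (Set.range α)) :=
  stmt_6_general D hDcl nv hunit hcone α hα hUESi β δ β₀ hβ₀ hcompat
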